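/- arXiv:1802.03657 — 2 statements merged into one kernel-verified Lean document; each statement's English description precedes it below -/
import Mathlib

section
/- Let (T,λ) be an edge-labeled tree explaining ε, and let x, y, z ∈ X be pairwise distinct with ε(x,y) = ⊗ and ε(z,y) ∈ M. Then T displays the triple xy|z, i.e., lca_T(x,y) ≺_T lca_T(x,y,z). -/
namespace GenFitch

/-- A rooted tree with leaf set `X`: a finite tree (acyclic connected simple
graph) with a distinguished root and an injective embedding of `X` onto the
set of vertices of degree at most one (the leaves). -/
structure RootedTree (X : Type) where
  V : Type
  fintypeV : Fintype V
  G : SimpleGraph V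
  isTree : G.IsTree
  root : V
  leaf : X → V
  leaf_inj : Function.Injective leaf
  leaf_iff : ∀ v : V, (∃ x : X, leaf x = v) ↔ (G.neighborSet v).ncard ≤ 1

namespace RootedTree

variable {X : Type}

/-- Degree of a vertex. -/
noncomputable def deg (T : RootedTree X) (v : T.V) : ℕ := (T.G.neighborSet v).ncard

/-- `v` is a leaf. -/
def IsLeaf (T : RootedTree X) (v : T.V) : Prop := ∃ x : X, T.leaf x = v

/-- `T` is phylogenetic: the root is an inner vertex of degree at least 2 and
every other inner vertex has degree at least 3. -/
def Phylo (T : RootedTree X) : Prop :=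
  ¬ T.IsLeaf T.root ∧ 2 ≤ T.deg T.root ∧
    ∀ v : T.V, ¬ T.IsLeaf v → v ≠ T.root → 3 ≤ T.deg v

/-- `T` is binary: the root has degree exactly 2 and every other inner vertex
has degree exactly 3. -/
def Binary (T : RootedTree X) : Prop :=
  T.deg T.root = 2 ∧ ∀ v : T.V, ¬ T.IsLeaf v → v ≠ T.root → T.deg v = 3

/-- `u` is an ancestor of `v` (written `u ⪰_T v`): `u` lies on the (unique)
path from the root to `v`. -/
def Anc (T : RootedTree X) (u v : T.V) : Prop :=
  ∀ p : T.G.Walk T.root v, p.IsPath → u ∈ p.support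

/-- `l` is the least common ancestor of the set of vertices `S`. -/
def IsLcaSet (T : RootedTree X) (l : T.V) (S : Set T.V) : Prop :=
  (∀ v ∈ S, T.Anc l v) ∧ ∀ u : T.V, (∀ v ∈ S, T.Anc u v) → T.Anc u l

/-- `T` displays the rooted triple `xy|z`, i.e. `lca(x,y) ≺ lca(x,y,z)`. -/
def Displays (T : RootedTree X) (x y z : X) : Prop :=
  ∃ l₂ l₃ : T.V, T.IsLcaSet l₂ {T.leaf x, T.leaf y} ∧
    T.IsLcaSet l₃ {T.leaf x, T.leaf y, T.leaf z} ∧ T.Anc l₃ l₂ ∧ l₂ ≠ l₃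

end RootedTree

/-- Some edge on the (unique) path from `lca(x,y)` to `y` carries the label
`m`.  Labels are drawn from `Option L`, with `none` playing the role of `⊗`. -/
def PathHasLabel {X L : Type} (T : RootedTree X) (lam : Sym2 T.V → Option L)
    (x y : X) (m : L) : Prop :=
  ∃ l : T.V, T.IsLcaSet l {T.leaf x, T.leaf y} ∧
    ∃ p : T.G.Walk l (T.leaf y), p.IsPath ∧ ∃ e ∈ p.edges, lam e = some m

/-- The edge-labeled tree `(T,lam)` explains the map `eps`:
for all distinct `x y`, `eps x y = some m` iff some edge on the path from
`lca(x,y)` to `y` has label `m`, and `eps x y = none` (i.e. `⊗`) iff no edge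
on that path carries a label in `L`. -/
def Explains {X L : Type} (T : RootedTree X) (lam : Sym2 T.V → Option L)
    (eps : X → X → Option L) : Prop :=
  ∀ x y : X, x ≠ y →
    ((∀ m : L, eps x y = some m ↔ PathHasLabel T lam x y m) ∧
     (eps x y = none ↔ ∀ m : L, ¬ PathHasLabel T lam x y m))

/-- `eps` is tree-like: some edge-labeled phylogenetic tree explains it. -/
def TreeLike {X L : Type} (eps : X → X → Option L) : Prop :=
  ∃ (T : RootedTree X) (lam : Sym2 T.V → Option L), T.Phylo ∧ Explains T lam eps

/-- The set `X_s` for a symbol `s ∈ M ∪ {⊗}` (encoded as `s : Option M`):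
those `x` having an in-arc labeled `s` and all other in-arcs labeled `⊗` or `s`. -/
def Xset {X M : Type} (eps : X → X → Option M) (s : Option M) : Set X :=
  {x : X | ∃ z : X, z ≠ x ∧ eps z x = s ∧
    ∀ z' : X, z' ≠ z → z' ≠ x → (eps z' x = none ∨ eps z' x = s)}

/-- The sets `X_s`, `s ∈ M ∪ {⊗}`, form a quasi-partition of `X`: pairwise
disjoint, union `X`, and at most one of them empty. -/
def QuasiPartition {X M : Type} (eps : X → X → Option M) : Prop :=
  (∀ s t : Option M, s ≠ t → Disjoint (Xset eps s) (Xset eps t)) ∧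
  (⋃ s : Option M, Xset eps s) = Set.univ ∧
  {s : Option M | Xset eps s = ∅}.Subsingleton

/-- A digraph `(Y, A)` is a simple Fitch graph: it is explained by a
`{1,⊗}`-edge-labeled phylogenetic tree on `Y` (a digraph on at most one
vertex is trivially explained by the trivial tree). -/
def IsFitchGraph (Y : Type) (A : Y → Y → Prop) : Prop :=
  Subsingleton Y ∨
  ∃ (T : RootedTree Y) (lam : Sym2 T.V → Option Unit), T.Phylo ∧
    ∀ x y : Y, x ≠ y → (A x y ↔ PathHasLabel T lam x y Unit.unit)

/-- `T'` is obtained from `T` by contracting (the fibers of) `φ`; equivalently,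
`T` refines `T'`. -/
structure IsContractionMap {X : Type} (T T' : RootedTree X) (φ : T.V → T'.V) :
    Prop where
  surj : Function.Surjective φ
  root_map : φ T.root = T'.root
  leaf_map : ∀ x : X, φ (T.leaf x) = T'.leaf x
  adj_map : ∀ a b : T.V, T.G.Adj a b → φ a = φ b ∨ T'.G.Adj (φ a) (φ b)
  adj_lift : ∀ u v : T'.V, T'.G.Adj u v →
    ∃ a b : T.V, T.G.Adj a b ∧ φ a = u ∧ φ b = v
  fiber_conn : ∀ u : T'.V, (T.G.induce {a : T.V | φ a = u}).Connected

/-- `(T,lam)` is a least-resolved tree explaining `eps`: it explains `eps` and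
no tree obtained from `T` by contracting one or more edges admits an
edge-labeling explaining `eps`. -/
def LeastResolved {X M : Type} (eps : X → X → Option M) (T : RootedTree X)
    (lam : Sym2 T.V → Option M) : Prop :=
  T.Phylo ∧ Explains T lam eps ∧
    ∀ (T' : RootedTree X) (φ : T.V → T'.V) (lam' : Sym2 T'.V → Option M),
      IsContractionMap T T' φ → ¬ Function.Injective φ → T'.Phylo →
        ¬ Explains T' lam' eps

/-- The rooted triple `xy|z` is informative for `eps`. -/
def Informative {X M : Type} (eps : X → X → Option M) (x y z : X) : Prop :=
  x ≠ y ∧ x ≠ z ∧ y ≠ z ∧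
  ∃ m : M, eps z x = some m ∧ eps z y = some m ∧ eps x z = eps y z ∧
    (eps x y = none ∨ eps x y = some m) ∧
    (eps y x = none ∨ eps y x = some m) ∧
    (eps x y = none ∨ eps y x = none)

/-- `T'` (a rooted tree on `Y`, with `incl : Y → X` and vertex embedding `ι`)
is the restriction `T|Y` of `T` to the leaf set `Y`: leaves map to leaves,
the ancestor relation is preserved and reflected, the vertices of `T'`
correspond exactly to the least common ancestors of pairs of `Y`-leaves in
`T`, and the root of `T'` corresponds to the least common ancestor of all
`Y`-leaves. -/
structure IsRestriction {X Y : Type} (T : RootedTree X) (incl : Y → X)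
    (T' : RootedTree Y) (ι : T'.V → T.V) : Prop where
  inj : Function.Injective ι
  leaf_map : ∀ y : Y, ι (T'.leaf y) = T.leaf (incl y)
  anc_iff : ∀ a b : T'.V, T'.Anc a b ↔ T.Anc (ι a) (ι b)
  image : ∀ v : T.V, (∃ a : T'.V, ι a = v) ↔
      ∃ y z : Y, T.IsLcaSet v {T.leaf (incl y), T.leaf (incl z)}
  root_map : T.IsLcaSet (ι T'.root) {v : T.V | ∃ y : Y, v = T.leaf (incl y)}

/-! If `lca(x,y)` were also `lca(x,y,z)`, it would be a common ancestor of `z` and `y`, hence an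
ancestor of `lca(z,y)`. The path from `lca(z,y)` to `y`, which carries a label in `M` because
`ε(z,y) ∈ M`, would then be part of the path from `lca(x,y)` to `y`, contradicting `ε(x,y) = ⊗`.
Least common ancestors exist because the ancestors of a vertex form a chain, strictly ordered by
distance from the root. -/

namespace RootedTree

open SimpleGraph Walk

variable {X : Type} (T : RootedTree X)

theorem path_unique {a b : T.V} {p q : T.G.Walk a b} (hp : p.IsPath) (hq : q.IsPath) : p = q :=
  (T.isTree.existsUnique_path a b).unique hp hq

theorem exists_isPath (a b : T.V) : ∃ p : T.G.Walk a b, p.IsPath :=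
  (T.isTree.existsUnique_path a b).exists

variable {T}

theorem anc_of_mem_support {u v : T.V} {p : T.G.Walk T.root v} (hp : p.IsPath)
    (hu : u ∈ p.support) : T.Anc u v :=
  fun _ hq => T.path_unique hq hp ▸ hu

theorem anc_refl (v : T.V) : T.Anc v v := fun p _ => p.end_mem_support

theorem anc_root (v : T.V) : T.Anc T.root v := fun p _ => p.start_mem_support

theorem anc_trans {u v w : T.V} (huv : T.Anc u v) (hvw : T.Anc v w) : T.Anc u w := by
  classical
  intro p hp
  have hv := hvw p hp
  exact p.support_takeUntil_subset_support hv (huv _ (hp.takeUntil hv))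

theorem dist_root_lt_of_anc {u v : T.V} (h : T.Anc u v) (hne : u ≠ v) :
    T.G.dist T.root u < T.G.dist T.root v := by
  classical
  obtain ⟨p, hp, hlen⟩ := T.isTree.connected.exists_path_of_dist T.root v
  calc T.G.dist T.root u ≤ (p.takeUntil u (h p hp)).length := dist_le _
    _ < p.length := length_takeUntil_lt_length _ hne
    _ = T.G.dist T.root v := hlen

theorem anc_antisymm {u v : T.V} (huv : T.Anc u v) (hvu : T.Anc v u) : u = v := by
  by_contra hne
  exact lt_asymm (dist_root_lt_of_anc huv hne) (dist_root_lt_of_anc hvu (Ne.symm hne))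

theorem anc_total {u w v : T.V} (hu : T.Anc u v) (hw : T.Anc w v) : T.Anc u w ∨ T.Anc w u := by
  classical
  obtain ⟨p, hp⟩ := T.exists_isPath T.root v
  have hwp := hw p hp
  have hup := hu p hp
  rw [← p.take_spec hwp, mem_support_append_iff] at hup
  rcases hup with hup | hup
  · exact Or.inl (anc_of_mem_support (hp.takeUntil hwp) hup)
  · have hpath : ((p.takeUntil w hwp).append ((p.dropUntil w hwp).takeUntil u hup)).IsPath := by
      have hp' := hp
      rw [← p.take_spec hwp, ← (p.dropUntil w hwp).take_spec hup, append_assoc] at hp'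
      exact hp'.of_append_left
    exact Or.inr (anc_of_mem_support hpath (by simp))

variable (T) in
theorem exists_isLcaSet (S : Set T.V) (hS : S.Nonempty) : ∃ l, T.IsLcaSet l S := by
  obtain ⟨v₀, hv₀⟩ := hS
  have := T.fintypeV
  obtain ⟨l, hl, hmax⟩ := Set.exists_max_image {u | ∀ v ∈ S, T.Anc u v} (T.G.dist T.root)
    (Set.toFinite _) ⟨T.root, fun v _ => anc_root v⟩
  refine ⟨l, hl, fun u hu => ?_⟩
  rcases anc_total (hu v₀ hv₀) (hl v₀ hv₀) with hul | hlu
  · exact hul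
  · obtain rfl | hne := eq_or_ne l u
    · exact anc_refl l
    · exact absurd (hmax u hu) (dist_root_lt_of_anc hlu hne).not_ge

theorem IsLcaSet.anc_of_subset {l l' : T.V} {S S' : Set T.V} (hl : T.IsLcaSet l S)
    (hl' : T.IsLcaSet l' S') (hSS' : S ⊆ S') : T.Anc l' l :=
  hl.2 l' fun v hv => hl'.1 v (hSS' hv)

theorem mem_support_of_anc {a b v : T.V} {p : T.G.Walk a v} (hp : p.IsPath) (hab : T.Anc a b)
    (hbv : T.Anc b v) : b ∈ p.support := by
  classical
  obtain ⟨r, hr⟩ := T.exists_isPath T.root v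
  have ha : a ∈ r.support := anc_trans hab hbv r hr
  rw [T.path_unique hp (hr.dropUntil ha)]
  have hb := hbv r hr
  rw [← r.take_spec ha, mem_support_append_iff] at hb
  rcases hb with hb | hb
  · rw [anc_antisymm (anc_of_mem_support (hr.takeUntil ha) hb) hab]
    exact start_mem_support _
  · exact hb

end RootedTree

theorem PathHasLabel.of_anc {X L : Type} {T : RootedTree X} {lam : Sym2 T.V → Option L}
    {x y z : X} {l : T.V} {m : L} (hl : T.IsLcaSet l {T.leaf x, T.leaf y})
    (hz : T.Anc l (T.leaf z)) (h : PathHasLabel T lam z y m) : PathHasLabel T lam x y m := by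
  classical
  obtain ⟨l', hl', q, hq, e, he, hlam⟩ := h
  have hy : T.Anc l (T.leaf y) := hl.1 _ (by simp)
  have hll' : T.Anc l l' := hl'.2 l (by rintro v (rfl | rfl) <;> assumption)
  obtain ⟨p, hp⟩ := T.exists_isPath l (T.leaf y)
  have hl'p : l' ∈ p.support := RootedTree.mem_support_of_anc hp hll' (hl'.1 _ (by simp))
  rw [T.path_unique hq (hp.dropUntil hl'p)] at he
  exact ⟨l, hl, p, hp, e, p.edges_dropUntil_subset_edges hl'p he, hlam⟩

theorem stmt13_general {X M : Type}
    (eps : X → X → Option M)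
    (T : RootedTree X) (lam : Sym2 T.V → Option M)
    (hexp : Explains T lam eps)
    (x y z : X) (hxy : x ≠ y) (hyz : y ≠ z)
    (h1 : eps x y = none) (h2 : ∃ m : M, eps z y = some m) :
    T.Displays x y z := by
  obtain ⟨m, hm⟩ := h2
  obtain ⟨l₂, hl₂⟩ := T.exists_isLcaSet {T.leaf x, T.leaf y} (by simp)
  obtain ⟨l₃, hl₃⟩ := T.exists_isLcaSet {T.leaf x, T.leaf y, T.leaf z} (by simp)
  refine ⟨l₂, l₃, hl₂, hl₃, hl₂.anc_of_subset hl₃ (by simp [Set.insert_subset_iff]), ?_⟩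
  rintro rfl
  have hzy : PathHasLabel T lam z y m := ((hexp z y hyz.symm).1 m).mp hm
  exact (hexp x y hxy).2.mp h1 m (hzy.of_anc hl₂ (hl₃.1 _ (by simp)))

theorem stmt13 {X M : Type} [Fintype X] [Fintype M] [Nonempty M]
    (hX : 1 < Fintype.card X)
    (eps : X → X → Option M)
    (T : RootedTree X) (lam : Sym2 T.V → Option M)
    (hphylo : T.Phylo) (hexp : Explains T lam eps)
    (x y z : X) (hxy : x ≠ y) (hxz : x ≠ z) (hyz : y ≠ z)
    (h1 : eps x y = none) (h2 : ∃ m : M, eps z y = some m) :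
    T.Displays x y z :=
  stmt13_general eps T lam hexp x y z hxy hyz h1 h2

end GenFitch
end

section
/- Let E be a map from (X×X)∖Δ to P(M) ∪ {⊗} such that each value in P(M) is a nonempty subset of M and the subsets occurring as values of E are pairwise disjoint (any two values of E in P(M) are either equal or disjoint). Let N = { m_S : S a value of E in P(M) } be a set of fresh symbols, one per occurring subset, and define ε: (X×X)∖Δ → N ∪ {⊗} by ε(x,y) = m_{E(x,y)} if E(x,y) ∈ P(M) and ε(x,y) = ⊗ otherwise. If ε is tree-like, then E is tree-like of Type-1: there is a phylogenetic tree T on X with an edge-labeling λ into M ∪ {⊗} such that for every pair (x,y) with E(x,y) ∈ P(M), at least one m ∈ E(x,y) occurs as the label of an edge on the path from lca_T(x,y) to y, and for every pair with E(x,y) = ⊗, no edge on the path from lca_T(x,y) to y has a label in M. -/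
namespace GenFitch

theorem stmt18 {X M N : Type} [Fintype X] [Fintype M] [Nonempty M]
    (hX : 1 < Fintype.card X)
    (E : X → X → Option (Set M))
    (hne : ∀ (x y : X) (S : Set M), x ≠ y → E x y = some S → S.Nonempty)
    (hdisj : ∀ (x y x' y' : X) (S S' : Set M), x ≠ y → x' ≠ y' →
        E x y = some S → E x' y' = some S' → S = S' ∨ Disjoint S S')
    (code : N → Set M)
    (hcode_inj : Function.Injective code)
    (hcode_range : ∀ n : N, ∃ x y : X, x ≠ y ∧ E x y = some (code n))
    (eps : X → X → Option N)
    (heps : ∀ x y : X, x ≠ y →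
      (∀ S : Set M, E x y = some S ↔ ∃ n : N, eps x y = some n ∧ code n = S) ∧
      (E x y = none ↔ eps x y = none))
    (htl : TreeLike eps) :
    ∃ (T : RootedTree X) (lam : Sym2 T.V → Option M), T.Phylo ∧
      ∀ x y : X, x ≠ y →
        (∀ S : Set M, E x y = some S → ∃ m ∈ S, PathHasLabel T lam x y m) ∧
        (E x y = none → ∀ m : M, ¬ PathHasLabel T lam x y m) := by
  obtain ⟨T, lamN, hphylo, hexp⟩ := htl
  have hcne : ∀ n : N, (code n).Nonempty := by
    intro n
    obtain ⟨x, y, hxy, hE⟩ := hcode_range n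
    exact hne x y _ hxy hE
  classical
  let pick : N → M := fun n => (hcne n).choose
  have hpick : ∀ n, pick n ∈ code n := fun n => (hcne n).choose_spec
  refine ⟨T, fun e => (lamN e).map pick, hphylo, ?_⟩
  intro x y hxy
  constructor
  · intro S hS
    obtain ⟨n, hn, hcn⟩ := ((heps x y hxy).1 S).mp hS
    obtain ⟨l, hl, p, hp', e, he, hle⟩ := ((hexp x y hxy).1 n).mp hn
    exact ⟨pick n, hcn ▸ hpick n, l, hl, p, hp', e, he, by simp [hle]⟩
  · intro hE m hp
    have hnone : eps x y = none := ((heps x y hxy).2).mp hE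
    obtain ⟨l, hl, p, hp', e, he, hle⟩ := hp
    simp only [Option.map_eq_some_iff] at hle
    obtain ⟨n, hn, -⟩ := hle
    exact ((hexp x y hxy).2.mp hnone) n ⟨l, hl, p, hp', e, he, hn⟩

end GenFitch
end
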